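/- Let S be a separable metric space, ν a Borel probability measure on S, and µ = ν^{⊗ℕ} the infinite product measure on S^ℕ (the distribution of an iid process). Let θ ∈ (0,1), k ≥ 1, and for every integer m ≥ 1 let r_m > 0 be such that rr^m_1(r_m) = θ. Then lim_{m→∞} det^m_k(r_m) = 1 and lim_{m→∞} lavg^m_k(r_m) = ∞. -/

import Mathlib

/-!
For an iid process the `h` coordinates of two independent copies are `h` independent pairs,
so the correlation integrals factor: `c^m_k(r) = q^(m+k-1)` with `q = (ν×ν){ρ(x,y) ≤ r}`.
The normalisation `rr^m_1(r_m) = q_m^m = θ` forces `q_m = θ^(1/m) → 1`, and then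
`det^m_k(r_m) = k q_m^(k-1) - (k-1) q_m^k → 1` while `lavg^m_k(r_m) = k + q_m/(1 - q_m) → ∞`.
-/

open Filter Topology MeasureTheory

/-- `dmax h x y = max_{0 ≤ l < h} dist (x l) (y l)` (equals 0 if `h = 0`). -/
noncomputable def dmax {S : Type*} [MetricSpace S] (h : ℕ) (x y : ℕ → S) : ℝ :=
  (((Finset.range h).sup fun l => nndist (x l) (y l) : NNReal) : ℝ)

/-- The correlation integral `c^m_k(r) = (µ×µ){(x,y) : d^m_k(x,y) ≤ r}`,
where `d^m_k = dmax (m + k - 1)` (the Chebyshev embedding metric). -/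
noncomputable def cInt {S : Type*} [MetricSpace S] [MeasurableSpace S]
    (μ : Measure (ℕ → S)) (m k : ℕ) (r : ℝ) : ℝ :=
  ((μ.prod μ) {p : (ℕ → S) × (ℕ → S) | dmax (m + k - 1) p.1 p.2 ≤ r}).toReal

/-- The recurrence integral `rr^m_k(r) = k·c^m_k(r) − (k − 1)·c^m_{k+1}(r)`. -/
noncomputable def rrInt {S : Type*} [MetricSpace S] [MeasurableSpace S]
    (μ : Measure (ℕ → S)) (m k : ℕ) (r : ℝ) : ℝ :=
  (k : ℝ) * cInt μ m k r - ((k : ℝ) - 1) * cInt μ m (k + 1) r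

/-- The asymptotic determinism `det^m_k(r) = rr^m_k(r)/rr^m_1(r)`. -/
noncomputable def detInt {S : Type*} [MetricSpace S] [MeasurableSpace S]
    (μ : Measure (ℕ → S)) (m k : ℕ) (r : ℝ) : ℝ :=
  rrInt μ m k r / rrInt μ m 1 r

/-- The mean diagonal line length
`lavg^m_k(r) = k + c^m_{k+1}(r)/(c^m_k(r) − c^m_{k+1}(r))`. -/
noncomputable def lavgInt {S : Type*} [MetricSpace S] [MeasurableSpace S]
    (μ : Measure (ℕ → S)) (m k : ℕ) (r : ℝ) : ℝ :=
  (k : ℝ) + cInt μ m (k + 1) r / (cInt μ m k r - cInt μ m (k + 1) r)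

section Factorization

variable {S : Type*}

theorem dmax_le_iff [MetricSpace S] {h : ℕ} {x y : ℕ → S} {s : ℝ} (hs : 0 ≤ s) :
    dmax h x y ≤ s ↔ ∀ l < h, dist (x l) (y l) ≤ s := by
  lift s to NNReal using hs
  simp only [dmax, NNReal.coe_le_coe, Finset.sup_le_iff, Finset.mem_range, ← coe_nndist]

variable [MeasurableSpace S]

theorem measurePreserving_pairs_of_map_eq_pi {μ : Measure (ℕ → S)} [SFinite μ]
    {ν : Measure S} [SigmaFinite ν] {h : ℕ}
    (hμ : μ.map (fun x (i : Fin h) => x (i : ℕ)) = Measure.pi fun _ => ν) :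
    MeasurePreserving (fun p : (ℕ → S) × (ℕ → S) => fun i : Fin h => (p.1 i, p.2 i))
      (μ.prod μ) (Measure.pi fun _ => ν.prod ν) := by
  have hrestrict : MeasurePreserving (fun x (i : Fin h) => x (i : ℕ)) μ
      (Measure.pi fun _ => ν) :=
    ⟨measurable_pi_lambda _ fun i => measurable_pi_apply _, hμ⟩
  exact (measurePreserving_arrowProdEquivProdArrow S S (Fin h) (fun _ => ν) (fun _ => ν)).symm
    |>.comp (hrestrict.prod hrestrict)

theorem prod_setOf_dmax_le_eq_pow [MetricSpace S] [SecondCountableTopology S] [BorelSpace S]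
    {μ : Measure (ℕ → S)} [SFinite μ] {ν : Measure S} [SigmaFinite ν] {h : ℕ}
    (hμ : μ.map (fun x (i : Fin h) => x (i : ℕ)) = Measure.pi fun _ => ν) {s : ℝ} (hs : 0 ≤ s) :
    (μ.prod μ) {p : (ℕ → S) × (ℕ → S) | dmax h p.1 p.2 ≤ s} =
      (ν.prod ν) {q : S × S | dist q.1 q.2 ≤ s} ^ h := by
  have hball : MeasurableSet {q : S × S | dist q.1 q.2 ≤ s} :=
    (isClosed_le continuous_dist continuous_const).measurableSet
  have hset : {p : (ℕ → S) × (ℕ → S) | dmax h p.1 p.2 ≤ s} =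
      (fun p : (ℕ → S) × (ℕ → S) => fun i : Fin h => (p.1 i, p.2 i)) ⁻¹'
        Set.univ.pi fun _ => {q : S × S | dist q.1 q.2 ≤ s} := by
    ext p
    simp [dmax_le_iff hs, Fin.forall_iff]
  rw [hset, (measurePreserving_pairs_of_map_eq_pi hμ).measure_preimage
    (MeasurableSet.univ_pi fun _ => hball).nullMeasurableSet, Measure.pi_pi]
  simp

noncomputable def marginalCInt [MetricSpace S] (ν : Measure S) (s : ℝ) : ℝ :=
  ((ν.prod ν) {q : S × S | dist q.1 q.2 ≤ s}).toReal

theorem cInt_eq_marginalCInt_pow [MetricSpace S] [SecondCountableTopology S] [BorelSpace S]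
    {μ : Measure (ℕ → S)} [SFinite μ] {ν : Measure S} [SigmaFinite ν]
    (hiid : ∀ n : ℕ, μ.map (fun x (i : Fin n) => x (i : ℕ)) = Measure.pi fun _ : Fin n => ν)
    {s : ℝ} (hs : 0 ≤ s) (m k : ℕ) :
    cInt μ m k s = marginalCInt ν s ^ (m + k - 1) := by
  rw [cInt, prod_setOf_dmax_le_eq_pow (hiid _) hs, ENNReal.toReal_pow, marginalCInt]

end Factorization

section PowerLaw

variable {S : Type*} [MetricSpace S] [MeasurableSpace S] {μ : Measure (ℕ → S)} {m k : ℕ}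
  {s q : ℝ}

theorem rrInt_eq_of_cInt_eq_pow (hc : ∀ j, cInt μ m j s = q ^ (m + j - 1)) :
    rrInt μ m k s = q ^ m * (k * q ^ (k - 1) - (k - 1) * q ^ k) := by
  cases k with
  | zero => simp [rrInt, hc]
  | succ j =>
    simp only [rrInt, hc, Nat.add_sub_cancel, ← Nat.add_assoc, pow_succ, pow_add]
    push_cast
    ring

theorem detInt_eq_of_cInt_eq_pow (hq : q ≠ 0) (hc : ∀ j, cInt μ m j s = q ^ (m + j - 1)) :
    detInt μ m k s = k * q ^ (k - 1) - (k - 1) * q ^ k := by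
  rw [detInt, rrInt_eq_of_cInt_eq_pow hc, rrInt_eq_of_cInt_eq_pow hc]
  field_simp
  simp

theorem lavgInt_eq_of_cInt_eq_pow (hm : 1 ≤ m) (hq0 : q ≠ 0) (hq1 : q ≠ 1)
    (hc : ∀ j, cInt μ m j s = q ^ (m + j - 1)) :
    lavgInt μ m k s = k + q / (1 - q) := by
  have hsucc : m + (k + 1) - 1 = m + k - 1 + 1 := by omega
  have hpow : q ^ (m + k - 1) ≠ 0 := pow_ne_zero _ hq0
  have hsub : 1 - q ≠ 0 := sub_ne_zero.2 hq1.symm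
  rw [lavgInt, hc, hc, hsucc, pow_succ]
  field_simp

end PowerLaw

theorem tendsto_nhds_one_of_pow_eq {q : ℕ → ℝ} {θ : ℝ} (hθ : 0 < θ) (hq0 : ∀ m, 0 ≤ q m)
    (hq : ∀ m, 1 ≤ m → q m ^ m = θ) : Tendsto q atTop (𝓝 1) := by
  have hroot : ∀ᶠ m : ℕ in atTop, θ ^ ((m : ℝ)⁻¹) = q m := by
    filter_upwards [eventually_ge_atTop 1] with m hm
    rw [← hq m hm, Real.pow_rpow_inv_natCast (hq0 m) (by omega)]
  have hlim : Tendsto (fun m : ℕ => θ ^ ((m : ℝ)⁻¹)) atTop (𝓝 (θ ^ (0 : ℝ))) :=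
    (Real.continuousAt_const_rpow hθ.ne').tendsto.comp
      (tendsto_inv_atTop_zero.comp tendsto_natCast_atTop_atTop)
  rw [Real.rpow_zero] at hlim
  exact hlim.congr' hroot

theorem tendsto_div_one_sub_atTop {α : Type*} {l : Filter α} {q : α → ℝ}
    (hq : Tendsto q l (𝓝 1)) (hq1 : ∀ᶠ x in l, q x < 1) :
    Tendsto (fun x => q x / (1 - q x)) l atTop := by
  have hgap : Tendsto (fun x => 1 - q x) l (𝓝[>] 0) :=
    tendsto_nhdsWithin_of_tendsto_nhds_of_eventually_within _
      (by simpa using hq.const_sub 1) (hq1.mono fun x hx => sub_pos.2 hx)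
  simpa only [div_eq_mul_inv, Function.comp_def] using
    hq.pos_mul_atTop one_pos (tendsto_inv_nhdsGT_zero.comp hgap)

theorem spurious_structures_general {S : Type*} [MetricSpace S] [TopologicalSpace.SeparableSpace S]
    [MeasurableSpace S] [BorelSpace S]
    (ν : Measure S) [IsProbabilityMeasure ν]
    (μ : Measure (ℕ → S)) [IsProbabilityMeasure μ]
    (hiid : ∀ n : ℕ, μ.map (fun x (i : Fin n) => x (i : ℕ)) =
      Measure.pi fun _ : Fin n => ν)
    (θ : ℝ) (hθ0 : 0 < θ) (hθ1 : θ < 1) (k : ℕ)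
    (r : ℕ → ℝ) (hr : ∀ m : ℕ, 1 ≤ m → 0 < r m ∧ rrInt μ m 1 (r m) = θ) :
    Filter.Tendsto (fun m : ℕ => detInt μ m k (r m)) Filter.atTop (nhds 1) ∧
    Filter.Tendsto (fun m : ℕ => lavgInt μ m k (r m)) Filter.atTop Filter.atTop := by
  have := UniformSpace.secondCountable_of_separable S
  set q : ℕ → ℝ := fun m => marginalCInt ν (r m)
  have hc : ∀ m, 1 ≤ m → ∀ j, cInt μ m j (r m) = q m ^ (m + j - 1) := fun m hm =>
    cInt_eq_marginalCInt_pow hiid (hr m hm).1.le m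
  have hqθ : ∀ m, 1 ≤ m → q m ^ m = θ := fun m hm => by
    simpa [rrInt_eq_of_cInt_eq_pow (hc m hm)] using (hr m hm).2
  have hq0 : ∀ m, 0 ≤ q m := fun m => ENNReal.toReal_nonneg
  have hq_pos : ∀ m, 1 ≤ m → 0 < q m := fun m hm =>
    (hq0 m).lt_of_ne fun h => hθ0.ne' (by rw [← hqθ m hm, ← h, zero_pow (by omega)])
  have hq_lt_one : ∀ m, 1 ≤ m → q m < 1 := fun m hm =>
    (pow_lt_one_iff_of_nonneg (hq0 m) (by omega)).1 (hqθ m hm ▸ hθ1)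
  have hlim : Tendsto q atTop (𝓝 1) := tendsto_nhds_one_of_pow_eq hθ0 hq0 hqθ
  constructor
  · have hpoly : Continuous fun x : ℝ => k * x ^ (k - 1) - (k - 1) * x ^ k := by fun_prop
    refine (tendsto_congr' ?_).2 (by simpa using (hpoly.tendsto 1).comp hlim)
    filter_upwards [eventually_ge_atTop 1] with m hm
    exact detInt_eq_of_cInt_eq_pow (hq_pos m hm).ne' (hc m hm)
  · refine (tendsto_congr' ?_).2 (tendsto_atTop_add_const_left _ (k : ℝ)
      (tendsto_div_one_sub_atTop hlim (eventually_atTop.2 ⟨1, hq_lt_one⟩)))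
    filter_upwards [eventually_ge_atTop 1] with m hm
    exact lavgInt_eq_of_cInt_eq_pow hm (hq_pos m hm).ne' (hq_lt_one m hm).ne (hc m hm)

/-- Let `S` be a separable metric space, `ν` a Borel probability
measure on `S`, and `µ = ν^{⊗ℕ}` the distribution of an iid process (characterized by
its finite-dimensional marginals). Let `θ ∈ (0,1)`, `k ≥ 1`, and for every integer
`m ≥ 1` let `r_m > 0` be such that `rr^m_1(r_m) = θ`. Then
`lim_{m→∞} det^m_k(r_m) = 1` and `lim_{m→∞} lavg^m_k(r_m) = ∞`. -/
theorem spurious_structures {S : Type*} [MetricSpace S] [TopologicalSpace.SeparableSpace S]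
    [MeasurableSpace S] [BorelSpace S]
    (ν : Measure S) [IsProbabilityMeasure ν]
    (μ : Measure (ℕ → S)) [IsProbabilityMeasure μ]
    (hiid : ∀ n : ℕ, μ.map (fun x (i : Fin n) => x (i : ℕ)) =
      Measure.pi fun _ : Fin n => ν)
    (θ : ℝ) (hθ0 : 0 < θ) (hθ1 : θ < 1) (k : ℕ) (hk : 1 ≤ k)
    (r : ℕ → ℝ) (hr : ∀ m : ℕ, 1 ≤ m → 0 < r m ∧ rrInt μ m 1 (r m) = θ) :
    Filter.Tendsto (fun m : ℕ => detInt μ m k (r m)) Filter.atTop (nhds 1) ∧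
    Filter.Tendsto (fun m : ℕ => lavgInt μ m k (r m)) Filter.atTop Filter.atTop :=
  spurious_structures_general ν μ hiid θ hθ0 hθ1 k r hr
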